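/- arXiv:1611.01065 — 5 statements merged into one kernel-verified Lean document; each statement's English description precedes it below -/
import Mathlib

section
/- Let b(x,y) = x₁y₁ + ⋯ + x_{n-1}y_{n-1} − x_n y_n be the Minkowski bilinear form on ℝ^n, and let F = {x : b(x,x) ≤ 0, x_n > 0} be the closed future cone minus the origin. Let K ⊆ F be the truncation K = {x ∈ ℝ^n : b(x,x) < 0, x_n > 0, b(x − rv, v) ≤ 0} where v is a future unit timelike vector (b(v,v) = −1, v_n > 0) and r > 0. Then the Minkowski dual K* = {y ∈ ℝ^n : b(x,y) ≤ −1 for all x ∈ K} equals the future cone of (1/r)v, i.e. K* = {(1/r)v + w : b(w,w) ≤ 0, w_n ≥ 0}. -/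
/-- The Minkowski bilinear form of signature `(n,1)` on `ℝ^(n+1)`. -/
noncomputable def minkBil (n : ℕ) (x y : Fin (n + 1) → ℝ) : ℝ :=
  (∑ i : Fin n, x i.castSucc * y i.castSucc) - x (Fin.last n) * y (Fin.last n)


/-- spatial part -/
noncomputable def mS (n : ℕ) (x y : Fin (n + 1) → ℝ) : ℝ :=
  ∑ i : Fin n, x i.castSucc * y i.castSucc

lemma minkBil_def (n : ℕ) (x y : Fin (n + 1) → ℝ) :
    minkBil n x y = mS n x y - x (Fin.last n) * y (Fin.last n) := rfl

lemma mS_cs (n : ℕ) (x y : Fin (n + 1) → ℝ) :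
    mS n x y * mS n x y ≤ mS n x x * mS n y y := by
  have h := Finset.sum_mul_sq_le_sq_mul_sq Finset.univ
    (fun i : Fin n => x i.castSucc) (fun i : Fin n => y i.castSucc)
  simpa only [mS, pow_two] using h

lemma mS_nonneg (n : ℕ) (x : Fin (n + 1) → ℝ) : 0 ≤ mS n x x :=
  Finset.sum_nonneg fun i _ => mul_self_nonneg _

lemma minkBil_comm (n : ℕ) (x y : Fin (n + 1) → ℝ) : minkBil n x y = minkBil n y x := by
  simp [minkBil, mul_comm]

lemma minkBil_lin (n : ℕ) (a b : ℝ) (x y w : Fin (n + 1) → ℝ) :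
    minkBil n (a • x + b • y) w = a * minkBil n x w + b * minkBil n y w := by
  have h : ∀ i : Fin (n+1), (a • x + b • y) i = a * x i + b * y i := by
    intro i; simp
  have h2 : ∀ i : Fin n, (a * x i.castSucc + b * y i.castSucc) * w i.castSucc
      = a * (x i.castSucc * w i.castSucc) + b * (y i.castSucc * w i.castSucc) := by
    intro i; ring
  simp only [minkBil, h, h2, Finset.sum_add_distrib, ← Finset.mul_sum]
  ring

lemma minkBil_smul_left (n : ℕ) (a : ℝ) (x w : Fin (n + 1) → ℝ) :
    minkBil n (a • x) w = a * minkBil n x w := by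
  have := minkBil_lin n a 0 x x w
  simpa using this

lemma minkBil_sub_smul (n : ℕ) (a : ℝ) (x y w : Fin (n + 1) → ℝ) :
    minkBil n (x - a • y) w = minkBil n x w - a * minkBil n y w := by
  have := minkBil_lin n 1 (-a) x y w
  simp only [one_smul, one_mul, neg_smul, neg_mul] at this
  rw [show x - a • y = x + -(a • y) by abel] at *
  rw [this]; ring

lemma minkBil_expand (n : ℕ) (a b : ℝ) (x y : Fin (n + 1) → ℝ) :
    minkBil n (a • x + b • y) (a • x + b • y)
      = a * a * minkBil n x x + 2 * (a * b) * minkBil n x y + b * b * minkBil n y y := by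
  rw [minkBil_lin, minkBil_comm n x (a • x + b • y), minkBil_lin, minkBil_comm n y (a • x + b • y),
    minkBil_lin, minkBil_comm n y x]
  ring

/-- Two future causal vectors pair nonpositively. -/
lemma causal_pair (n : ℕ) (x y : Fin (n + 1) → ℝ)
    (hx : minkBil n x x ≤ 0) (hxn : 0 ≤ x (Fin.last n))
    (hy : minkBil n y y ≤ 0) (hyn : 0 ≤ y (Fin.last n)) :
    minkBil n x y ≤ 0 := by
  rw [minkBil_def] at *
  have cs := mS_cs n x y
  have h1 := mS_nonneg n x
  have h2 := mS_nonneg n y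
  nlinarith [mul_nonneg hxn hyn, sq_nonneg (mS n x y + x (Fin.last n) * y (Fin.last n)),
    sq_nonneg (mS n x y - x (Fin.last n) * y (Fin.last n))]

/-- A future causal nonzero (here: positive last coordinate) vector pairs strictly
negatively with a future timelike vector. -/
lemma causal_pair_strict (n : ℕ) (x v : Fin (n + 1) → ℝ)
    (hx : minkBil n x x ≤ 0) (hxn : 0 < x (Fin.last n))
    (hv : minkBil n v v < 0) (hvn : 0 < v (Fin.last n)) :
    minkBil n x v < 0 := by
  rw [minkBil_def] at *
  have cs := mS_cs n x v
  have h1 := mS_nonneg n x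
  have h2 := mS_nonneg n v
  set a := x (Fin.last n)
  set b := v (Fin.last n)
  have e1 : mS n x x * mS n v v ≤ (a * a) * mS n v v :=
    mul_le_mul_of_nonneg_right (by linarith) h2
  have e2 : (a * a) * mS n v v < (a * a) * (b * b) := by
    apply mul_lt_mul_of_pos_left (by linarith) (by positivity)
  have hm2 : mS n x v * mS n x v < (a * b) * (a * b) := by nlinarith
  by_contra hcon
  push_neg at hcon
  have hge : a * b ≤ mS n x v := by linarith
  have : (a * b) * (a * b) ≤ mS n x v * mS n x v :=
    mul_le_mul hge hge (by positivity) (le_trans (by positivity) hge)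
  linarith

/-- A causal vector pairing nonpositively with a future timelike vector is future. -/
lemma causal_future (n : ℕ) (w v : Fin (n + 1) → ℝ)
    (hw : minkBil n w w ≤ 0) (hwv : minkBil n w v ≤ 0)
    (hv : minkBil n v v < 0) (hvn : 0 < v (Fin.last n)) :
    0 ≤ w (Fin.last n) := by
  by_contra h
  push_neg at h
  have hnw : minkBil n (-w) (-w) ≤ 0 := by
    have : (-w : Fin (n+1) → ℝ) = (-1 : ℝ) • w + (0:ℝ) • w := by simp
    rw [this, minkBil_expand]; nlinarith
  have hnwn : 0 < (-w) (Fin.last n) := by simpa using neg_pos.mpr h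
  have := causal_pair_strict n (-w) v hnw hnwn hv hvn
  have hneg : minkBil n (-w) v = - minkBil n w v := by
    have : (-w : Fin (n+1) → ℝ) = (-1 : ℝ) • w + (0:ℝ) • w := by simp
    rw [this, minkBil_lin]; ring
  rw [hneg] at this
  linarith

/-- timelike vectors have nonzero last coordinate -/
lemma timelike_last_ne (n : ℕ) (x : Fin (n + 1) → ℝ) (hx : minkBil n x x < 0) :
    x (Fin.last n) ≠ 0 := by
  intro h
  rw [minkBil_def, h] at hx
  have := mS_nonneg n x
  nlinarith

/-- positive semidefiniteness on the orthogonal complement of a unit timelike vector -/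
lemma posdef_orth (n : ℕ) (v u : Fin (n + 1) → ℝ)
    (hv : minkBil n v v = -1) (hvn : 0 < v (Fin.last n))
    (hu : minkBil n v u = 0) : 0 ≤ minkBil n u u := by
  rw [minkBil_def] at *
  have cs := mS_cs n v u
  have h1 := mS_nonneg n v
  have h2 := mS_nonneg n u
  set t := v (Fin.last n)
  set s := u (Fin.last n)
  have hm : mS n v u = t * s := by linarith
  have hvv : mS n v v = t * t - 1 := by linarith
  rw [hm, hvv] at cs
  nlinarith [mul_pos hvn hvn, sq_nonneg s]

/-- The Minkowski dual of an admissible truncation (intersection of the future cone with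
the future side of a spacelike hyperplane at distance `r` from the origin with future unit
normal `v`) is the future cone of the point `(1/r) • v`. -/
theorem stmt_5 (n : ℕ) (v : Fin (n + 1) → ℝ) (r : ℝ)
    (hv : minkBil n v v = -1) (hvf : 0 < v (Fin.last n)) (hr : 0 < r) :
    {y : Fin (n + 1) → ℝ |
        ∀ x ∈ {x : Fin (n + 1) → ℝ |
            minkBil n x x < 0 ∧ 0 < x (Fin.last n) ∧ minkBil n (x - r • v) v ≤ 0},
          minkBil n x y ≤ -1} =
      {y : Fin (n + 1) → ℝ |
        ∃ w : Fin (n + 1) → ℝ,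
          minkBil n w w ≤ 0 ∧ 0 ≤ w (Fin.last n) ∧ y = (1 / r) • v + w} := by
  have hvtl : minkBil n v v < 0 := by rw [hv]; norm_num
  have h1r : r * (1/r) = 1 := by field_simp
  ext y
  simp only [Set.mem_setOf_eq]
  constructor
  · intro hy
    have h0 : minkBil n (r • v) y ≤ -1 := by
      apply hy
      refine ⟨?_, ?_, ?_⟩
      · rw [show (r • v : Fin (n+1) → ℝ) = r • v + (0:ℝ) • v from by simp,
          minkBil_expand, hv]
        nlinarith [mul_pos hr hr]
      · simp only [Pi.smul_apply, smul_eq_mul]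
        exact mul_pos hr hvf
      · rw [minkBil_sub_smul, minkBil_smul_left]
        linarith
    rw [minkBil_smul_left] at h0
    set p := minkBil n v y with hp_def
    have hp : p ≤ -(1/r) := by nlinarith [hr]
    set u := y + p • v with hu_def
    have hvu : minkBil n v u = 0 := by
      rw [hu_def, minkBil_comm,
        show y + p • v = (1:ℝ) • y + p • v from by rw [one_smul],
        minkBil_lin, hv, minkBil_comm n y v, ← hp_def]
      ring
    have huu0 : 0 ≤ minkBil n u u := posdef_orth n v u hv hvf hvu
    set c := -(1/r) - p with hc_def
    have hc0 : 0 ≤ c := by rw [hc_def]; linarith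
    have hkey : minkBil n u u ≤ c * c := by
      rcases eq_or_lt_of_le huu0 with hez | hpos
      · nlinarith [mul_self_nonneg c]
      · set β := Real.sqrt (minkBil n u u) with hβ_def
        have hββ : β * β = minkBil n u u := Real.mul_self_sqrt huu0
        have hβpos : 0 < β := Real.sqrt_pos.mpr hpos
        set z := β⁻¹ • u with hz_def
        have hβne : β ≠ 0 := ne_of_gt hβpos
        have hzz : minkBil n z z = 1 := by
          rw [hz_def, minkBil_smul_left, minkBil_comm, minkBil_smul_left, minkBil_comm, ← hββ]
          field_simp
        have hvz : minkBil n v z = 0 := by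
          rw [hz_def, minkBil_comm, minkBil_smul_left, minkBil_comm, hvu]; ring
        have e1 : minkBil n u y = minkBil n u u := by
          rw [hu_def, show y + p • v = (1:ℝ) • y + p • v from by rw [one_smul],
            minkBil_lin, minkBil_expand, minkBil_comm n y v, ← hp_def, hv]
          ring
        have hzy : minkBil n z y = β := by
          rw [hz_def, minkBil_smul_left, e1, ← hββ]
          field_simp
        have hstep : ∀ s : ℝ, 0 < s → s < 1 → r * p + (r * s) * β ≤ -1 := by
          intro s hs0 hs1
          have hmem1 : minkBil n (r • v + (r*s) • z) (r • v + (r*s) • z) < 0 := by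
            rw [minkBil_expand, hv, hzz, hvz]
            nlinarith [mul_pos (mul_pos hr hr)
              (mul_pos (by linarith : (0:ℝ) < 1 - s) (by linarith : (0:ℝ) < 1 + s))]
          have hxsv : minkBil n (r • v + (r*s) • z) v = -r := by
            rw [minkBil_lin, hv, minkBil_comm n z v, hvz]; ring
          have hmem2 : 0 < (r • v + (r*s) • z) (Fin.last n) := by
            have hne := timelike_last_ne n _ hmem1
            have hge := causal_future n (r • v + (r*s) • z) v (le_of_lt hmem1)
              (by rw [hxsv]; linarith) hvtl hvf
            exact lt_of_le_of_ne hge (Ne.symm hne)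
          have hmem3 : minkBil n ((r • v + (r*s) • z) - r • v) v ≤ 0 := by
            rw [minkBil_sub_smul, hxsv, hv]; linarith
          have happ := hy _ ⟨hmem1, hmem2, hmem3⟩
          rw [minkBil_lin, ← hp_def, hzy] at happ
          linarith
        have hβc : β ≤ c := by
          by_contra hlt
          push_neg at hlt
          have h12 := hstep (1/2) (by norm_num) (by norm_num)
          have hc2 : β/2 ≤ c := by nlinarith
          have hcpos : 0 < c := lt_of_lt_of_le (half_pos hβpos) hc2
          set s := (c/β + 1)/2 with hs_def
          have hcb1 : c/β < 1 := (div_lt_one hβpos).mpr hlt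
          have hcb0 : 0 < c/β := div_pos hcpos hβpos
          have hs0 : 0 < s := by rw [hs_def]; linarith
          have hs1 : s < 1 := by rw [hs_def]; linarith
          have hsc : c < s * β := by
            have hds : c/β < s := by rw [hs_def]; linarith
            exact (div_lt_iff₀ hβpos).mp hds
          have hfin := hstep s hs0 hs1
          have hmul : r * c < r * (s * β) := mul_lt_mul_of_pos_left hsc hr
          have hrc : r * c = -1 - r * p := by rw [hc_def, mul_sub, mul_neg, h1r]
          nlinarith [hfin, hmul, hrc]
        nlinarith
    have hww : minkBil n (c • v + u) (c • v + u) ≤ 0 := by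
      rw [show c • v + u = c • v + (1:ℝ) • u from by rw [one_smul], minkBil_expand, hv, hvu]
      nlinarith
    have hwv : minkBil n (c • v + u) v ≤ 0 := by
      rw [show c • v + u = c • v + (1:ℝ) • u from by rw [one_smul], minkBil_lin, hv,
        minkBil_comm n u v, hvu]
      linarith
    refine ⟨c • v + u, hww, causal_future n _ v hww hwv hvtl hvf, ?_⟩
    funext i
    rw [hc_def, hu_def]
    simp only [Pi.add_apply, Pi.smul_apply, smul_eq_mul, Pi.sub_apply]
    ring
  · rintro ⟨w, hww, hwl, hyeq⟩ x ⟨hx1, hx2, hx3⟩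
    have hxv : minkBil n x v ≤ -r := by
      rw [minkBil_sub_smul, hv] at hx3; linarith
    have hxw : minkBil n x w ≤ 0 := causal_pair n x w (le_of_lt hx1) (le_of_lt hx2) hww hwl
    rw [hyeq, minkBil_comm,
      show (1/r) • v + w = (1/r) • v + (1:ℝ) • w from by rw [one_smul],
      minkBil_lin, minkBil_comm n v x, minkBil_comm n w x]
    nlinarith [one_div_pos.mpr hr]
end

section
/- Let (S, I) be a Riemannian surface, B a self-adjoint (1,1)-tensor field on S that is invertible at every point and satisfies the Codazzi equation d^{∇^I}B = 0. Define the third fundamental form III(v,w) = I(B v, B w). Then the Gaussian curvature of the metric III satisfies K_III = K_I / det B. -/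
open Matrix

/-- Partial derivative in the `i`-th coordinate direction. -/
noncomputable def pd {m : ℕ} (i : Fin m) (f : (Fin m → ℝ) → ℝ) (x : Fin m → ℝ) : ℝ :=
  fderiv ℝ f x (Pi.single i 1)

/-- Christoffel symbols `Γ^k_{ij}` of the Levi-Civita connection of a metric `g`,
given as a field of matrices. -/
noncomputable def christoffel {m : ℕ} (g : (Fin m → ℝ) → Matrix (Fin m) (Fin m) ℝ)
    (k i j : Fin m) (x : Fin m → ℝ) : ℝ :=
  (1 / 2) * ∑ l, (g x)⁻¹ k l *
    (pd i (fun y => g y j l) x + pd j (fun y => g y i l) x - pd l (fun y => g y i j) x)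

/-- Gaussian curvature of a metric `g` on a surface:
`K = g(R(e₀,e₁)e₁, e₀) / det g`. -/
noncomputable def gaussCurv (g : (Fin 2 → ℝ) → Matrix (Fin 2) (Fin 2) ℝ)
    (x : Fin 2 → ℝ) : ℝ :=
  (∑ l, g x 0 l *
      (pd 0 (fun y => christoffel g l 1 1 y) x - pd 1 (fun y => christoffel g l 0 1 y) x +
        ∑ m, (christoffel g l 0 m x * christoffel g m 1 1 x -
          christoffel g l 1 m x * christoffel g m 0 1 x))) / (g x).det

/-! ### Generic calculus helpers -/

section helpers

variable {f f₁ f₂ : (Fin 2 → ℝ) → ℝ} {x : Fin 2 → ℝ} {i : Fin 2}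

lemma pd_add (h1 : DifferentiableAt ℝ f₁ x) (h2 : DifferentiableAt ℝ f₂ x) :
    pd i (fun y => f₁ y + f₂ y) x = pd i f₁ x + pd i f₂ x := by
  unfold pd; rw [fderiv_fun_add h1 h2]; simp

lemma pd_sub (h1 : DifferentiableAt ℝ f₁ x) (h2 : DifferentiableAt ℝ f₂ x) :
    pd i (fun y => f₁ y - f₂ y) x = pd i f₁ x - pd i f₂ x := by
  unfold pd; rw [fderiv_fun_sub h1 h2]; simp

lemma pd_mul (h1 : DifferentiableAt ℝ f₁ x) (h2 : DifferentiableAt ℝ f₂ x) :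
    pd i (fun y => f₁ y * f₂ y) x = pd i f₁ x * f₂ x + f₁ x * pd i f₂ x := by
  unfold pd; rw [fderiv_fun_mul h1 h2]; simp; ring

lemma pd_cmul (c : ℝ) (h1 : DifferentiableAt ℝ f₁ x) :
    pd i (fun y => c * f₁ y) x = c * pd i f₁ x := by
  unfold pd; rw [fderiv_const_mul h1]; simp

lemma contDiff_pd (hf : ContDiff ℝ (⊤ : ℕ∞) f) (i : Fin 2) : ContDiff ℝ (⊤ : ℕ∞) (fun x => pd i f x) := by
  have h1 : ContDiff ℝ (⊤ : ℕ∞) (fderiv ℝ f) := hf.fderiv_right (by simp)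
  exact (ContinuousLinearMap.apply ℝ ℝ (Pi.single i 1 : Fin 2 → ℝ)).contDiff.comp h1

lemma pd_comm (hf : ContDiff ℝ (⊤ : ℕ∞) f) (i j : Fin 2) (x : Fin 2 → ℝ) :
    pd i (fun y => pd j f y) x = pd j (fun y => pd i f y) x := by
  have hd : Differentiable ℝ f := hf.differentiable (by simp)
  have hfd : ContDiff ℝ (⊤ : ℕ∞) (fderiv ℝ f) := hf.fderiv_right (by simp)
  have h2 : DifferentiableAt ℝ (fderiv ℝ f) x := (hfd.differentiable (by simp)) x
  have hsymm := second_derivative_symmetric (f' := fderiv ℝ f)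
    (fun y => (hd y).hasFDerivAt) h2.hasFDerivAt
    (Pi.single i 1 : Fin 2 → ℝ) (Pi.single j 1)
  unfold pd
  rw [fderiv_clm_apply h2 (differentiableAt_const _),
    fderiv_clm_apply h2 (differentiableAt_const _)]
  simpa using hsymm

lemma inv_entry (A : Matrix (Fin 2) (Fin 2) ℝ) (i j : Fin 2) :
    A⁻¹ i j = (!![A 1 1, -A 0 1; -A 1 0, A 0 0] i j) / A.det := by
  rw [Matrix.inv_def, Matrix.adjugate_fin_two, Ring.inverse_eq_inv']
  simp [div_eq_inv_mul]

lemma contDiff_entry_inv {M : (Fin 2 → ℝ) → Matrix (Fin 2) (Fin 2) ℝ}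
    (hM : ∀ i j, ContDiff ℝ (⊤ : ℕ∞) fun x => M x i j) (hdet : ∀ x, (M x).det ≠ 0) (i j : Fin 2) :
    ContDiff ℝ (⊤ : ℕ∞) (fun x => (M x)⁻¹ i j) := by
  have hdetc : ContDiff ℝ (⊤ : ℕ∞) (fun x => (M x).det) := by
    have e : (fun x => (M x).det) = fun x => M x 0 0 * M x 1 1 - M x 0 1 * M x 1 0 :=
      funext fun x => det_fin_two _
    rw [e]; exact ((hM 0 0).mul (hM 1 1)).sub ((hM 0 1).mul (hM 1 0))
  have e : (fun x => (M x)⁻¹ i j)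
      = fun x => (!![M x 1 1, -(M x 0 1); -(M x 1 0), M x 0 0] i j) / (M x).det :=
    funext fun x => inv_entry _ i j
  rw [e]
  fin_cases i <;> fin_cases j <;> simp <;>
    [exact (hM 1 1).div hdetc hdet; exact ((hM 0 1).neg).div hdetc hdet;
     exact ((hM 1 0).neg).div hdetc hdet; exact (hM 0 0).div hdetc hdet]

lemma contDiff_christoffel {M : (Fin 2 → ℝ) → Matrix (Fin 2) (Fin 2) ℝ}
    (hM : ∀ i j, ContDiff ℝ (⊤ : ℕ∞) fun x => M x i j) (hdet : ∀ x, (M x).det ≠ 0) (k i j : Fin 2) :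
    ContDiff ℝ (⊤ : ℕ∞) (fun x => christoffel M k i j x) := by
  unfold christoffel
  simp only [Fin.sum_univ_two]
  have hpd : ∀ (p a b : Fin 2), ContDiff ℝ (⊤ : ℕ∞) (fun x => pd p (fun y => M y a b) x) :=
    fun p a b => contDiff_pd (hM a b) p
  exact contDiff_const.mul
    (((contDiff_entry_inv hM hdet k 0).mul
        (((hpd i j 0).add (hpd j i 0)).sub (hpd 0 i j))).add
      ((contDiff_entry_inv hM hdet k 1).mul
        (((hpd i j 1).add (hpd j i 1)).sub (hpd 1 i j))))

lemma mul_inv_ent (A : Matrix (Fin 2) (Fin 2) ℝ) (h : A.det ≠ 0) (a b : Fin 2) :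
    A a 0 * A⁻¹ 0 b + A a 1 * A⁻¹ 1 b = if a = b then 1 else 0 := by
  have h1 := mul_nonsing_inv A (isUnit_iff_ne_zero.mpr h)
  have h2 := congrFun (congrFun h1 a) b
  simpa [Matrix.mul_apply, Fin.sum_univ_two, Matrix.one_apply] using h2

lemma inv_mul_ent (A : Matrix (Fin 2) (Fin 2) ℝ) (h : A.det ≠ 0) (a b : Fin 2) :
    A⁻¹ a 0 * A 0 b + A⁻¹ a 1 * A 1 b = if a = b then 1 else 0 := by
  have h1 := nonsing_inv_mul A (isUnit_iff_ne_zero.mpr h)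
  have h2 := congrFun (congrFun h1 a) b
  simpa [Matrix.mul_apply, Fin.sum_univ_two, Matrix.one_apply] using h2

end helpers

/-! ### Lemmas about an abstract metric -/

section withg
variable (g : (Fin 2 → ℝ) → Matrix (Fin 2) (Fin 2) ℝ)

lemma lowered (hgdet : ∀ x, (g x).det ≠ 0) (x : Fin 2 → ℝ) (c i l : Fin 2) :
    ∑ a, g x c a * christoffel g a i l x
      = (1/2) * (pd i (fun y => g y l c) x + pd l (fun y => g y i c) x
          - pd c (fun y => g y i l) x) := by
  have h00 := mul_inv_ent (g x) (hgdet x) c 0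
  have h01 := mul_inv_ent (g x) (hgdet x) c 1
  unfold christoffel
  simp only [Fin.sum_univ_two]
  fin_cases c <;> simp only [Fin.zero_eta, Fin.mk_one] at h00 h01 ⊢ <;>
    norm_num at h00 h01 <;>
    linear_combination
      (1/2 * (pd i (fun y => g y l 0) x + pd l (fun y => g y i 0) x
        - pd 0 (fun y => g y i l) x)) * h00 +
      (1/2 * (pd i (fun y => g y l 1) x + pd l (fun y => g y i 1) x
        - pd 1 (fun y => g y i l) x)) * h01

lemma gamma_symm (hgsym : ∀ x, (g x)ᵀ = g x) (x : Fin 2 → ℝ) (k i j : Fin 2) :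
    christoffel g k i j x = christoffel g k j i x := by
  have e : (fun y => g y j i) = (fun y => g y i j) :=
    funext fun y => (congrFun (congrFun (hgsym y) j) i).symm
  unfold christoffel
  simp only [Fin.sum_univ_two]
  rw [show (fun y => g y j i) = (fun y => g y i j) from e]
  ring

end withg

/-! ### The third fundamental form and the Codazzi field -/

noncomputable def Hf (g B : (Fin 2 → ℝ) → Matrix (Fin 2) (Fin 2) ℝ) :
    (Fin 2 → ℝ) → Matrix (Fin 2) (Fin 2) ℝ := fun y => (B y)ᵀ * g y * B y

noncomputable def Rcal (g : (Fin 2 → ℝ) → Matrix (Fin 2) (Fin 2) ℝ) (k m : Fin 2)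
    (x : Fin 2 → ℝ) : ℝ :=
  pd 0 (christoffel g k 1 m) x - pd 1 (christoffel g k 0 m) x
    + ∑ n, (christoffel g k 0 n x * christoffel g n 1 m x
        - christoffel g k 1 n x * christoffel g n 0 m x)

section main
variable (g B : (Fin 2 → ℝ) → Matrix (Fin 2) (Fin 2) ℝ)

noncomputable def Ff (k i j : Fin 2) (x : Fin 2 → ℝ) : ℝ :=
  pd i (fun y => B y k j) x + ∑ l, christoffel g k i l x * B x l j

noncomputable def GFf (c i j : Fin 2) (x : Fin 2 → ℝ) : ℝ :=
  ∑ a, g x c a * Ff g B a i j x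

variable (hg : ∀ i j, ContDiff ℝ (⊤ : ℕ∞) (fun x => g x i j))
  (hB : ∀ i j, ContDiff ℝ (⊤ : ℕ∞) (fun x => B x i j))
  (hgsym : ∀ x, (g x)ᵀ = g x) (hgdet : ∀ x, (g x).det ≠ 0) (hBdet : ∀ x, (B x).det ≠ 0)
  (hcodazzi : ∀ x (k i j : Fin 2),
      pd i (fun y => B y k j) x + (∑ l, christoffel g k i l x * B x l j) -
          (∑ l, christoffel g l i j x * B x k l) =
        pd j (fun y => B y k i) x + (∑ l, christoffel g k j l x * B x l i) -
          (∑ l, christoffel g l j i x * B x k l))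

include hgsym hcodazzi in
lemma Ff_symm (x : Fin 2 → ℝ) (k i j : Fin 2) : Ff g B k i j x = Ff g B k j i x := by
  have h := hcodazzi x k i j
  have e0 := gamma_symm g hgsym x 0 i j
  have e1 := gamma_symm g hgsym x 1 i j
  unfold Ff
  simp only [Fin.sum_univ_two] at h ⊢
  rw [e0, e1] at h
  linarith

include hgsym hcodazzi in
lemma GFf_symm (x : Fin 2 → ℝ) (c i j : Fin 2) : GFf g B c i j x = GFf g B c j i x := by
  unfold GFf
  simp only [Fin.sum_univ_two, Ff_symm g B hgsym hcodazzi x 0 i j,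
    Ff_symm g B hgsym hcodazzi x 1 i j]

include hgdet in
lemma GFf_formula (x : Fin 2 → ℝ) (c i j : Fin 2) :
    GFf g B c i j x = (∑ a, g x c a * pd i (fun y => B y a j) x)
      + ∑ l, (1/2) * (pd i (fun y => g y l c) x + pd l (fun y => g y i c) x
          - pd c (fun y => g y i l) x) * B x l j := by
  have l0 := lowered g hgdet x c i 0
  have l1 := lowered g hgdet x c i 1
  unfold GFf Ff
  simp only [Fin.sum_univ_two] at l0 l1 ⊢
  linear_combination (B x 0 j) * l0 + (B x 1 j) * l1

lemma h_apply (y : Fin 2 → ℝ) (p q : Fin 2) :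
    ((B y)ᵀ * g y * B y) p q = ∑ a, ∑ b, B y a p * g y a b * B y b q := by
  simp only [Matrix.mul_apply, Matrix.transpose_apply, Fin.sum_univ_two]
  ring

include hg hB in
lemma pdh_raw (x : Fin 2 → ℝ) (i p q : Fin 2) :
    pd i (fun y => ((B y)ᵀ * g y * B y) p q) x
      = ∑ a, ∑ b, (pd i (fun y => B y a p) x * g x a b * B x b q
          + B x a p * pd i (fun y => g y a b) x * B x b q
          + B x a p * g x a b * pd i (fun y => B y b q) x) := by
  have dg : ∀ (a b : Fin 2) (z : Fin 2 → ℝ), DifferentiableAt ℝ (fun y => g y a b) z :=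
    fun a b z => ((hg a b).differentiable (by simp)) z
  have dB : ∀ (a b : Fin 2) (z : Fin 2 → ℝ), DifferentiableAt ℝ (fun y => B y a b) z :=
    fun a b z => ((hB a b).differentiable (by simp)) z
  have e : (fun y => ((B y)ᵀ * g y * B y) p q)
      = fun y => (B y 0 p * g y 0 0 * B y 0 q + B y 0 p * g y 0 1 * B y 1 q)
          + (B y 1 p * g y 1 0 * B y 0 q + B y 1 p * g y 1 1 * B y 1 q) := by
    funext y; rw [h_apply]; simp only [Fin.sum_univ_two]; try ring
  rw [e]
  have pm3 : ∀ (a b c d : Fin 2),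
      pd i (fun y => B y a b * g y a c * B y c d) x
        = pd i (fun y => B y a b) x * g x a c * B x c d
          + B x a b * pd i (fun y => g y a c) x * B x c d
          + B x a b * g x a c * pd i (fun y => B y c d) x := by
    intro a b c d
    rw [pd_mul ((dB a b x).fun_mul (dg a c x)) (dB c d x), pd_mul (dB a b x) (dg a c x)]
    ring
  rw [pd_add (((dB 0 p x).fun_mul (dg 0 0 x)).fun_mul (dB 0 q x) |>.fun_add
        (((dB 0 p x).fun_mul (dg 0 1 x)).fun_mul (dB 1 q x)))
      ((((dB 1 p x).fun_mul (dg 1 0 x)).fun_mul (dB 0 q x)).fun_add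
        (((dB 1 p x).fun_mul (dg 1 1 x)).fun_mul (dB 1 q x))),
    pd_add (((dB 0 p x).fun_mul (dg 0 0 x)).fun_mul (dB 0 q x))
      (((dB 0 p x).fun_mul (dg 0 1 x)).fun_mul (dB 1 q x)),
    pd_add (((dB 1 p x).fun_mul (dg 1 0 x)).fun_mul (dB 0 q x))
      (((dB 1 p x).fun_mul (dg 1 1 x)).fun_mul (dB 1 q x)),
    pm3, pm3, pm3, pm3]
  simp only [Fin.sum_univ_two]
  try ring

include hg hB hgsym hgdet in
lemma pdh (x : Fin 2 → ℝ) (i p q : Fin 2) :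
    pd i (fun y => ((B y)ᵀ * g y * B y) p q) x
      = ∑ c, (GFf g B c i p x * B x c q + GFf g B c i q x * B x c p) := by
  have hg10v : g x 1 0 = g x 0 1 := (congrFun (congrFun (hgsym x) 1) 0).symm
  have hfg10 : (fun y => g y 1 0) = (fun y => g y 0 1) :=
    funext fun y => (congrFun (congrFun (hgsym y) 1) 0).symm
  rw [pdh_raw g B hg hB]
  simp only [GFf_formula g B hgdet, Fin.sum_univ_two, hfg10, hg10v]
  ring

include hg hB hgsym hgdet hcodazzi in
lemma christoffel_h (x : Fin 2 → ℝ) (m i j : Fin 2) :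
    christoffel (Hf g B) m i j x
      = ∑ c, ((Hf g B x)⁻¹ * (B x)ᵀ) m c * GFf g B c i j x := by
  unfold christoffel Hf
  simp only [pdh g B hg hB hgsym hgdet]
  simp only [Matrix.mul_apply, Matrix.transpose_apply, Fin.sum_univ_two,
    GFf_symm g B hgsym hcodazzi x 0 j i, GFf_symm g B hgsym hcodazzi x 1 j i,
    GFf_symm g B hgsym hcodazzi x 0 0 i, GFf_symm g B hgsym hcodazzi x 1 0 i,
    GFf_symm g B hgsym hcodazzi x 0 1 i, GFf_symm g B hgsym hcodazzi x 1 1 i,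
    GFf_symm g B hgsym hcodazzi x 0 0 j, GFf_symm g B hgsym hcodazzi x 1 0 j,
    GFf_symm g B hgsym hcodazzi x 0 1 j, GFf_symm g B hgsym hcodazzi x 1 1 j]
  ring

include hg hB hgsym hgdet hBdet hcodazzi in
lemma lemA (x : Fin 2 → ℝ) (k i j : Fin 2) :
    ∑ m, B x k m * christoffel (Hf g B) m i j x = Ff g B k i j x := by
  have hBu : IsUnit (B x).det := isUnit_iff_ne_zero.mpr (hBdet x)
  have hBtu : IsUnit ((B x)ᵀ).det := by rw [det_transpose]; exact hBu
  have key : B x * ((Hf g B x)⁻¹ * (B x)ᵀ) = (g x)⁻¹ := by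
    show B x * (((B x)ᵀ * g x * B x)⁻¹ * (B x)ᵀ) = (g x)⁻¹
    rw [Matrix.mul_inv_rev, Matrix.mul_inv_rev, ← Matrix.mul_assoc, ← Matrix.mul_assoc,
      mul_nonsing_inv _ hBu, Matrix.one_mul, Matrix.mul_assoc, nonsing_inv_mul _ hBtu,
      Matrix.mul_one]
  have key' : ∀ c : Fin 2, B x k 0 * ((Hf g B x)⁻¹ * (B x)ᵀ) 0 c
      + B x k 1 * ((Hf g B x)⁻¹ * (B x)ᵀ) 1 c = (g x)⁻¹ k c := by
    intro c
    have h2 := congrFun (congrFun key k) c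
    simpa [Matrix.mul_apply, Fin.sum_univ_two] using h2
  have dk0 := inv_mul_ent (g x) (hgdet x) k 0
  have dk1 := inv_mul_ent (g x) (hgdet x) k 1
  simp only [Fin.sum_univ_two, christoffel_h g B hg hB hgsym hgdet hcodazzi]
  rw [show (Ff g B k i j x) = (if k = 0 then 1 else 0) * Ff g B 0 i j x
      + (if k = 1 then 1 else 0) * Ff g B 1 i j x by
    fin_cases k <;> simp]
  rw [← dk0, ← dk1]
  unfold GFf
  simp only [Fin.sum_univ_two]
  linear_combination (Ff g B 0 i j x * g x 0 0 + Ff g B 1 i j x * g x 0 1) * key' 0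
    + (Ff g B 0 i j x * g x 1 0 + Ff g B 1 i j x * g x 1 1) * key' 1

include hg hB in
lemma hH : ∀ p q, ContDiff ℝ (⊤ : ℕ∞) (fun x => Hf g B x p q) := by
  intro p q
  have e : (fun x => Hf g B x p q) = fun x =>
      (B x 0 p * g x 0 0 * B x 0 q + B x 0 p * g x 0 1 * B x 1 q)
        + (B x 1 p * g x 1 0 * B x 0 q + B x 1 p * g x 1 1 * B x 1 q) := by
    funext y
    show ((B y)ᵀ * g y * B y) p q = _
    simp only [Matrix.mul_apply, Matrix.transpose_apply, Fin.sum_univ_two]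
    ring
  rw [e]
  exact ((((hB 0 p).mul (hg 0 0)).mul (hB 0 q)).add (((hB 0 p).mul (hg 0 1)).mul (hB 1 q))).add
    ((((hB 1 p).mul (hg 1 0)).mul (hB 0 q)).add (((hB 1 p).mul (hg 1 1)).mul (hB 1 q)))

include hgdet hBdet in
lemma hHdet : ∀ x, (Hf g B x).det ≠ 0 := by
  intro x
  show ((B x)ᵀ * g x * B x).det ≠ 0
  rw [Matrix.det_mul, Matrix.det_mul, Matrix.det_transpose]
  exact mul_ne_zero (mul_ne_zero (hBdet x) (hgdet x)) (hBdet x)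

include hg hB hgsym hgdet hBdet hcodazzi in
lemma diffA (x : Fin 2 → ℝ) (p k i j : Fin 2) :
    pd p (fun y => B y k 0) x * christoffel (Hf g B) 0 i j x
      + B x k 0 * pd p (christoffel (Hf g B) 0 i j) x
      + (pd p (fun y => B y k 1) x * christoffel (Hf g B) 1 i j x
      + B x k 1 * pd p (christoffel (Hf g B) 1 i j) x)
    = pd p (fun y => pd i (fun z => B z k j) y) x
      + (pd p (christoffel g k i 0) x * B x 0 j
        + christoffel g k i 0 x * pd p (fun y => B y 0 j) x
        + (pd p (christoffel g k i 1) x * B x 1 j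
        + christoffel g k i 1 x * pd p (fun y => B y 1 j) x)) := by
  have dB : ∀ (a b : Fin 2) (z : Fin 2 → ℝ), DifferentiableAt ℝ (fun y => B y a b) z :=
    fun a b z => ((hB a b).differentiable (by simp)) z
  have cdGH : ∀ (m i' j' : Fin 2), ContDiff ℝ (⊤ : ℕ∞) (christoffel (Hf g B) m i' j') :=
    fun m i' j' => contDiff_christoffel (hH g B hg hB) (hHdet g B hgdet hBdet) m i' j'
  have cdG : ∀ (m i' j' : Fin 2), ContDiff ℝ (⊤ : ℕ∞) (christoffel g m i' j') :=
    fun m i' j' => contDiff_christoffel hg hgdet m i' j'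
  have dGH : ∀ (m i' j' : Fin 2) (z : Fin 2 → ℝ),
      DifferentiableAt ℝ (christoffel (Hf g B) m i' j') z :=
    fun m i' j' z => ((cdGH m i' j').differentiable (by simp)) z
  have dG : ∀ (m i' j' : Fin 2) (z : Fin 2 → ℝ), DifferentiableAt ℝ (christoffel g m i' j') z :=
    fun m i' j' z => ((cdG m i' j').differentiable (by simp)) z
  have dpdB : ∀ (a b i' : Fin 2) (z : Fin 2 → ℝ),
      DifferentiableAt ℝ (fun y => pd i' (fun w => B w a b) y) z :=
    fun a b i' z => ((contDiff_pd (hB a b) i').differentiable (by simp)) z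
  have e : (fun y => B y k 0 * christoffel (Hf g B) 0 i j y
        + B y k 1 * christoffel (Hf g B) 1 i j y)
      = (fun y => pd i (fun z => B z k j) y
        + (christoffel g k i 0 y * B y 0 j + christoffel g k i 1 y * B y 1 j)) := by
    funext y
    have h2 := lemA g B hg hB hgsym hgdet hBdet hcodazzi y k i j
    unfold Ff at h2
    simp only [Fin.sum_univ_two] at h2
    linarith
  have e2 := congrArg (fun (f : (Fin 2 → ℝ) → ℝ) => pd p f x) e
  rw [pd_add ((dB k 0 x).fun_mul (dGH 0 i j x)) ((dB k 1 x).fun_mul (dGH 1 i j x)),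
    pd_mul (dB k 0 x) (dGH 0 i j x), pd_mul (dB k 1 x) (dGH 1 i j x),
    pd_add (dpdB k j i x) (((dG k i 0 x).fun_mul (dB 0 j x)).fun_add ((dG k i 1 x).fun_mul (dB 1 j x))),
    pd_add ((dG k i 0 x).fun_mul (dB 0 j x)) ((dG k i 1 x).fun_mul (dB 1 j x)),
    pd_mul (dG k i 0 x) (dB 0 j x), pd_mul (dG k i 1 x) (dB 1 j x)] at e2
  linarith

include hg hB hgsym hgdet hBdet hcodazzi in
lemma step6 (x : Fin 2 → ℝ) (k : Fin 2) :
    ∑ m, B x k m * Rcal (Hf g B) m 1 x = ∑ m, Rcal g k m x * B x m 1 := by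
  have D0 := diffA g B hg hB hgsym hgdet hBdet hcodazzi x 0 k 1 1
  have D1 := diffA g B hg hB hgsym hgdet hBdet hcodazzi x 1 k 0 1
  have A' : ∀ (a i j : Fin 2), B x a 0 * christoffel (Hf g B) 0 i j x
      + B x a 1 * christoffel (Hf g B) 1 i j x = Ff g B a i j x := by
    intro a i j
    have h2 := lemA g B hg hB hgsym hgdet hBdet hcodazzi x a i j
    simpa [Fin.sum_univ_two] using h2
  have Ak00 := A' k 0 0; have Ak01 := A' k 0 1; have Ak10 := A' k 1 0; have Ak11 := A' k 1 1
  have A011 := A' 0 1 1; have A111 := A' 1 1 1; have A001 := A' 0 0 1; have A101 := A' 1 0 1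
  have schw := pd_comm (hB k 1) 0 1 x
  unfold Ff at Ak00 Ak01 Ak10 Ak11 A011 A111 A001 A101
  simp only [Fin.sum_univ_two] at Ak00 Ak01 Ak10 Ak11 A011 A111 A001 A101
  unfold Rcal
  simp only [Fin.sum_univ_two]
  linear_combination D0 - D1 + schw
    + (christoffel (Hf g B) 0 1 1 x) * Ak00 + (christoffel (Hf g B) 1 1 1 x) * Ak01
    - (christoffel (Hf g B) 0 0 1 x) * Ak10 - (christoffel (Hf g B) 1 0 1 x) * Ak11
    + (christoffel g k 0 0 x) * A011 + (christoffel g k 0 1 x) * A111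
    - (christoffel g k 1 0 x) * A001 - (christoffel g k 1 1 x) * A101

end main

/-! ### Antisymmetry of the lowered curvature -/

section s7
variable (g : (Fin 2 → ℝ) → Matrix (Fin 2) (Fin 2) ℝ)
  (hg : ∀ i j, ContDiff ℝ (⊤ : ℕ∞) (fun x => g x i j))
  (hgsym : ∀ x, (g x)ᵀ = g x) (hgdet : ∀ x, (g x).det ≠ 0)

include hg hgdet in
lemma diffLow (x : Fin 2 → ℝ) (p c i j : Fin 2) :
    ∑ l, (pd p (fun y => g y c l) x * christoffel g l i j x
        + g x c l * pd p (christoffel g l i j) x)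
      = (1/2) * (pd p (fun y => pd i (fun z => g z j c) y) x
          + pd p (fun y => pd j (fun z => g z i c) y) x
          - pd p (fun y => pd c (fun z => g z i j) y) x) := by
  have dg : ∀ (a b : Fin 2) (z : Fin 2 → ℝ), DifferentiableAt ℝ (fun y => g y a b) z :=
    fun a b z => ((hg a b).differentiable (by simp)) z
  have dG : ∀ (m i' j' : Fin 2) (z : Fin 2 → ℝ), DifferentiableAt ℝ (christoffel g m i' j') z :=
    fun m i' j' z => (((contDiff_christoffel hg hgdet m i' j')).differentiable (by simp)) z
  have dpdg : ∀ (a b i' : Fin 2) (z : Fin 2 → ℝ),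
      DifferentiableAt ℝ (fun y => pd i' (fun w => g w a b) y) z :=
    fun a b i' z => ((contDiff_pd (hg a b) i').differentiable (by simp)) z
  have e : (fun y => g y c 0 * christoffel g 0 i j y + g y c 1 * christoffel g 1 i j y)
      = (fun y => (1/2) * (pd i (fun z => g z j c) y + pd j (fun z => g z i c) y
          - pd c (fun z => g z i j) y)) := by
    funext y
    have h2 := lowered g hgdet y c i j
    simpa [Fin.sum_univ_two] using h2
  have e2 := congrArg (fun (f : (Fin 2 → ℝ) → ℝ) => pd p f x) e
  rw [pd_add ((dg c 0 x).fun_mul (dG 0 i j x)) ((dg c 1 x).fun_mul (dG 1 i j x)),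
    pd_mul (dg c 0 x) (dG 0 i j x), pd_mul (dg c 1 x) (dG 1 i j x),
    pd_cmul _ (((dpdg j c i x).fun_add (dpdg i c j x)).fun_sub (dpdg i j c x)),
    pd_sub ((dpdg j c i x).fun_add (dpdg i c j x)) (dpdg i j c x),
    pd_add (dpdg j c i x) (dpdg i c j x)] at e2
  simp only [Fin.sum_univ_two]
  linarith

include hg hgsym hgdet in
lemma step7 (x : Fin 2 → ℝ) (a m : Fin 2) :
    (∑ l, g x a l * Rcal g l m x) + (∑ l, g x m l * Rcal g l a x) = 0 := by
  have hfs : ∀ c d : Fin 2, (fun y => g y c d) = (fun y => g y d c) :=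
    fun c d => funext fun y => (congrFun (congrFun (hgsym y) c) d).symm
  have hg10v : g x 1 0 = g x 0 1 := (congrFun (congrFun (hgsym x) 1) 0).symm
  have E := lowered g hgdet x
  have dl := diffLow g hg hgdet x
  have schwam := pd_comm (hg a m) 0 1 x
  have Ea00 := E a 0 0; have Ea01 := E a 0 1; have Ea10 := E a 1 0; have Ea11 := E a 1 1
  have Em00 := E m 0 0; have Em01 := E m 0 1; have Em10 := E m 1 0; have Em11 := E m 1 1
  have E00a := E 0 0 a; have E10a := E 1 0 a; have E01a := E 0 1 a; have E11a := E 1 1 a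
  have E00m := E 0 0 m; have E10m := E 1 0 m; have E01m := E 0 1 m; have E11m := E 1 1 m
  have dlA := dl 0 a 1 m; have dlB := dl 1 a 0 m; have dlC := dl 0 m 1 a; have dlD := dl 1 m 0 a
  clear E dl
  unfold Rcal
  simp only [Fin.sum_univ_two] at *
  simp only [hfs 0 a, hfs 0 m, hfs 1 a, hfs 1 m, hfs m a, hg10v] at *
  linear_combination dlA - dlB + dlC - dlD
    + schwam
    + christoffel g 0 1 m x * Ea00 + christoffel g 1 1 m x * Ea01
    - christoffel g 0 0 m x * Ea10 - christoffel g 1 0 m x * Ea11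
    + christoffel g 0 1 a x * Em00 + christoffel g 1 1 a x * Em01
    - christoffel g 0 0 a x * Em10 - christoffel g 1 0 a x * Em11
    + christoffel g 0 1 m x * E00a + christoffel g 1 1 m x * E10a
    - christoffel g 0 0 m x * E01a - christoffel g 1 0 m x * E11a
    + christoffel g 0 1 a x * E00m + christoffel g 1 1 a x * E10m
    - christoffel g 0 0 a x * E01m - christoffel g 1 0 a x * E11m
end s7

/-- If `I` (given by the matrix field `g`) is a Riemannian metric on a surface and `B` is an
`I`-self-adjoint, everywhere invertible (1,1)-tensor field satisfying the Codazzi equation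
`d^{∇^I} B = 0`, then the Gaussian curvature of the third fundamental form
`III = I(B·,B·)` (with matrix `Bᵀ g B`) satisfies `K_III = K_I / det B`. -/
theorem stmt_13 (g B : (Fin 2 → ℝ) → Matrix (Fin 2) (Fin 2) ℝ)
    (hg : ∀ i j, ContDiff ℝ (⊤ : ℕ∞) (fun x => g x i j))
    (hB : ∀ i j, ContDiff ℝ (⊤ : ℕ∞) (fun x => B x i j))
    (hgsym : ∀ x, (g x)ᵀ = g x)
    (hgpos : ∀ x, (g x).PosDef)
    (hselfadj : ∀ x, (g x * B x)ᵀ = g x * B x)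
    (hinv : ∀ x, (B x).det ≠ 0)
    (hcodazzi : ∀ x (k i j : Fin 2),
      pd i (fun y => B y k j) x + (∑ l, christoffel g k i l x * B x l j) -
          (∑ l, christoffel g l i j x * B x k l) =
        pd j (fun y => B y k i) x + (∑ l, christoffel g k j l x * B x l i) -
          (∑ l, christoffel g l j i x * B x k l)) :
    ∀ x, gaussCurv (fun y => (B y)ᵀ * g y * B y) x = gaussCurv g x / (B x).det := by
  intro x
  have hgdet : ∀ y, (g y).det ≠ 0 := fun y => (hgpos y).det_pos.ne'
  have S0 := step6 g B hg hB hgsym hgdet hinv hcodazzi x 0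
  have S1 := step6 g B hg hB hgsym hgdet hinv hcodazzi x 1
  have T00 := step7 g hg hgsym hgdet x 0 0
  have T11 := step7 g hg hgsym hgdet x 1 1
  have T01 := step7 g hg hgsym hgdet x 0 1
  have detH : (Hf g B x).det = (B x).det * (g x).det * (B x).det := by
    show ((B x)ᵀ * g x * B x).det = _
    rw [Matrix.det_mul, Matrix.det_mul, Matrix.det_transpose]
  show gaussCurv (Hf g B) x = gaussCurv g x / (B x).det
  have e1 : gaussCurv (Hf g B) x
      = (∑ l, Hf g B x 0 l * Rcal (Hf g B) l 1 x) / (Hf g B x).det := rfl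
  have e2 : gaussCurv g x = (∑ l, g x 0 l * Rcal g l 1 x) / (g x).det := rfl
  have key : ∑ l, Hf g B x 0 l * Rcal (Hf g B) l 1 x
      = (∑ l, g x 0 l * Rcal g l 1 x) * (B x).det := by
    have hApp : ∀ p q, Hf g B x p q = ∑ a, ∑ b, B x a p * g x a b * B x b q :=
      fun p q => h_apply g B x p q
    simp only [Fin.sum_univ_two] at S0 S1 T00 T11 T01 ⊢
    rw [hApp 0 0, hApp 0 1]
    simp only [Fin.sum_univ_two]
    rw [det_fin_two (B x)]
    linear_combination (B x 0 0 * g x 0 0 + B x 1 0 * g x 1 0) * S0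
      + (B x 0 0 * g x 0 1 + B x 1 0 * g x 1 1) * S1
      + (B x 0 0 * B x 0 1 / 2) * T00 + (B x 1 0 * B x 1 1 / 2) * T11
      + (B x 1 0 * B x 0 1) * T01
  rw [e1, e2, key, detH]
  have h1 : (B x).det ≠ 0 := hinv x
  have h2 : (g x).det ≠ 0 := hgdet x
  field_simp
end

section
/- (Weyl formula) Let ∇ and ∇̂ be torsion-free connections on an n-manifold N with parallel volume forms ω and ω̂ = λω, and suppose ∇ and ∇̂ have the same unparametrized geodesics (i.e., ∇̂_X X − ∇_X X is proportional to X for every vector field X). Then ∇̂_X Y − ∇_X Y = (X · ln λ^{1/(n+1)}) Y + (Y · ln λ^{1/(n+1)}) X for all vector fields X, Y. -/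
/-!
Polarizing `D(v, v) ∈ span v` along `v = eₐ ± e_b` and using the symmetry of `D` forces
`D(X, Y) = φ(X) Y + φ(Y) X` with `φₐ = D(eₐ, eₐ)ᵃ / 2`; contracting gives `∑ₖ D k i k = (n + 1) φᵢ`.
Parallelism of `ω` and `ω'` says `∂ᵢ ln ω = ∑ₖ Γ k i k`, so that trace is `∂ᵢ ln (ω' / ω)`.
-/

open Filter Topology ContinuousLinearMap

/-- `D(v, v) ∈ span v` for every `v`, where `D(v, w)ᵏ = ∑ D k i j vⁱ wʲ`. -/
def IsProjectiveDifference {K ι : Type*} [Field K] [Fintype ι] (D : ι → ι → ι → K) : Prop :=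
  ∀ v : ι → K, ∃ c : K, ∀ k, ∑ i, ∑ j, D k i j * v i * v j = c * v k

namespace IsProjectiveDifference

variable {K ι : Type*} [Field K] [Fintype ι] [DecidableEq ι] {D : ι → ι → ι → K}

lemma exists_single_add_single (hD : IsProjectiveDifference D) (a b : ι) (s t : K) :
    ∃ c : K, ∀ k, s * s * D k a a + s * t * (D k a b + D k b a) + t * t * D k b b =
      c * ((Pi.single a s : ι → K) k + (Pi.single b t : ι → K) k) := by
  obtain ⟨c, hc⟩ := hD (Pi.single a s + Pi.single b t)
  refine ⟨c, fun k => ?_⟩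
  rw [← Pi.add_apply, ← hc k]
  simp only [Pi.add_apply, Pi.single_apply, add_mul, mul_add, mul_ite, ite_mul, mul_zero,
    zero_mul, Finset.sum_add_distrib, Finset.sum_ite_eq', Finset.mem_univ, if_true]
  ring

lemma apply_self_self_of_ne (hD : IsProjectiveDifference D) {k a : ι} (hka : k ≠ a) :
    D k a a = 0 := by
  obtain ⟨c, hc⟩ := hD (Pi.single a 1)
  simpa [Pi.single_apply, hka] using hc k

lemma apply_of_ne_of_ne [CharZero K] (hD : IsProjectiveDifference D)
    (hsymm : ∀ k i j, D k i j = D k j i) {k a b : ι} (hka : k ≠ a) (hkb : k ≠ b) :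
    D k a b = 0 := by
  obtain ⟨c, hc⟩ := hD.exists_single_add_single a b 1 1
  have h := hc k
  simp only [Pi.single_apply, hka, hkb, if_false, add_zero, mul_zero, one_mul,
    hD.apply_self_self_of_ne hka, hD.apply_self_self_of_ne hkb, hsymm k b a] at h
  linear_combination h / 2

lemma two_mul_apply_self_left [CharZero K] (hD : IsProjectiveDifference D)
    (hsymm : ∀ k i j, D k i j = D k j i) {a b : ι} (hab : a ≠ b) : 2 * D a a b = D b b b := by
  obtain ⟨c, hc⟩ := hD.exists_single_add_single a b 1 1
  obtain ⟨c', hc'⟩ := hD.exists_single_add_single a b 1 (-1)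
  have hba := hab.symm
  have ha := hc a
  have hb := hc b
  have ha' := hc' a
  have hb' := hc' b
  simp only [Pi.single_apply, hab, hba, if_true, if_false, hD.apply_self_self_of_ne hab,
    hD.apply_self_self_of_ne hba, hsymm a b a, hsymm b b a] at ha hb ha' hb'
  linear_combination (ha - hb - ha' - hb') / 2

lemma apply_eq [CharZero K] (hD : IsProjectiveDifference D) (hsymm : ∀ k i j, D k i j = D k j i)
    (k i j : ι) :
    D k i j = D i i i / 2 * (if k = j then 1 else 0) + D j j j / 2 * (if k = i then 1 else 0) := by
  by_cases hij : i = j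
  · subst hij
    by_cases hki : k = i
    · subst hki
      simp only [if_true]
      ring
    · simp [hki, hD.apply_self_self_of_ne hki]
  by_cases hki : k = i
  · subst hki
    simp [hij, ← hD.two_mul_apply_self_left hsymm hij]
  by_cases hkj : k = j
  · subst hkj
    rw [hsymm k i k]
    simp [hki, ← hD.two_mul_apply_self_left hsymm (Ne.symm hij)]
  simp [hki, hkj, hD.apply_of_ne_of_ne hsymm hki hkj]

lemma sum_apply_self_right [CharZero K] (hD : IsProjectiveDifference D)
    (hsymm : ∀ k i j, D k i j = D k j i) (i : ι) :
    ∑ k, D k i k = (Fintype.card ι + 1) * (D i i i / 2) := by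
  rw [Finset.sum_congr rfl fun k _ => hD.apply_eq hsymm k i k]
  simp only [if_true, mul_one, mul_ite, mul_zero, Finset.sum_add_distrib,
    Finset.sum_ite_eq', Finset.mem_univ, Finset.sum_const, Finset.card_univ, nsmul_eq_mul]
  ring

theorem apply_eq_trace [CharZero K] (hD : IsProjectiveDifference D)
    (hsymm : ∀ k i j, D k i j = D k j i) (k i j : ι) :
    D k i j = (∑ α, D α i α) / (Fintype.card ι + 1) * (if k = j then 1 else 0) +
      (∑ α, D α j α) / (Fintype.card ι + 1) * (if k = i then 1 else 0) := by
  have hcard : (Fintype.card ι + 1 : K) ≠ 0 := Nat.cast_add_one_ne_zero _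
  rw [hD.sum_apply_self_right hsymm, hD.sum_apply_self_right hsymm,
    mul_div_cancel_left₀ _ hcard, mul_div_cancel_left₀ _ hcard]
  exact hD.apply_eq hsymm k i j

end IsProjectiveDifference

lemma fderiv_log_div_apply {E : Type*} [NormedAddCommGroup E] [NormedSpace ℝ E] {f g : E → ℝ}
    {x : E} (hf : DifferentiableAt ℝ f x) (hg : DifferentiableAt ℝ g x) (hfx : f x ≠ 0)
    (hgx : g x ≠ 0) (v : E) :
    fderiv ℝ (fun y => Real.log (f y / g y)) x v = fderiv ℝ f x v / f x - fderiv ℝ g x v / g x := by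
  have hlocal : (fun y => Real.log (f y / g y)) =ᶠ[𝓝 x]
      fun y => Real.log (f y) - Real.log (g y) := by
    filter_upwards [hf.continuousAt.eventually_ne hfx, hg.continuousAt.eventually_ne hgx]
      with y hfy hgy
    exact Real.log_div hfy hgy
  rw [hlocal.fderiv_eq, ((hf.hasFDerivAt.log hfx).fun_sub (hg.hasFDerivAt.log hgx)).fderiv]
  simp only [sub_apply, smul_apply, smul_eq_mul, inv_mul_eq_div]

/-- (Weyl formula) Let `∇`, `∇̂` be torsion-free connections (Christoffel symbols `Γ`, `Γ'`)
on an `n`-manifold with parallel volume forms `ω` and `ω' = λ ω`, having the same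
unparametrized geodesics (the difference tensor satisfies `D(v,v) ∈ span(v)` for all `v`).
Then `∇̂_X Y − ∇_X Y = (X・ln λ^{1/(n+1)}) Y + (Y・ln λ^{1/(n+1)}) X`, i.e. in
coordinates `Γ'^k_{ij} − Γ^k_{ij} = φᵢ δ^k_j + φⱼ δ^k_i` with `φᵢ = ∂ᵢ(ln λ)/(n+1)`. -/
theorem stmt_15 (n : ℕ)
    (Γ Γ' : Fin n → Fin n → Fin n → (Fin n → ℝ) → ℝ)
    (hΓtf : ∀ k i j x, Γ k i j x = Γ k j i x)
    (hΓ'tf : ∀ k i j x, Γ' k i j x = Γ' k j i x)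
    (ω ω' : (Fin n → ℝ) → ℝ)
    (hωpos : ∀ x, 0 < ω x) (hω'pos : ∀ x, 0 < ω' x)
    (hωdiff : Differentiable ℝ ω) (hω'diff : Differentiable ℝ ω')
    (hωpar : ∀ (i : Fin n) x, pd i ω x = (∑ α, Γ α i α x) * ω x)
    (hω'par : ∀ (i : Fin n) x, pd i ω' x = (∑ α, Γ' α i α x) * ω' x)
    (hgeod : ∀ x (v : Fin n → ℝ), ∃ c : ℝ,
      ∀ k, (∑ i, ∑ j, (Γ' k i j x - Γ k i j x) * v i * v j) = c * v k) :
    ∀ x (k i j : Fin n),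
      Γ' k i j x - Γ k i j x =
        (pd i (fun y => Real.log (ω' y / ω y)) x / (n + 1)) * (if k = j then 1 else 0) +
        (pd j (fun y => Real.log (ω' y / ω y)) x / (n + 1)) * (if k = i then 1 else 0) := by
  intro x k i j
  have hD : IsProjectiveDifference fun k i j => Γ' k i j x - Γ k i j x := hgeod x
  have hsymm : ∀ k i j, Γ' k i j x - Γ k i j x = Γ' k j i x - Γ k j i x := fun k i j => by
    rw [hΓtf, hΓ'tf]
  have htrace (i : Fin n) :
      pd i (fun y => Real.log (ω' y / ω y)) x = ∑ α, (Γ' α i α x - Γ α i α x) := by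
    have hω'i := hω'par i x
    have hωi := hωpar i x
    unfold pd at hω'i hωi ⊢
    rw [fderiv_log_div_apply (hω'diff x) (hωdiff x) (hω'pos x).ne' (hωpos x).ne', hω'i, hωi,
      Finset.sum_sub_distrib, mul_div_cancel_right₀ _ (hω'pos x).ne',
      mul_div_cancel_right₀ _ (hωpos x).ne']
  rw [htrace, htrace]
  simpa only [Fintype.card_fin] using hD.apply_eq_trace hsymm k i j
end

section
/- Let D be a symmetric (1,2)-tensor on a manifold N of dimension ≥ 2 such that for every tangent vector X at every point, D(X,X) is a scalar multiple of X. Then there exists a unique 1-form φ with D(X,Y) = φ(X)Y + φ(Y)X for all X, Y. -/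
theorem aux_bilin (m : ℕ) (hm : 2 ≤ m)
    (B : (Fin m → ℝ) →ₗ[ℝ] (Fin m → ℝ) →ₗ[ℝ] (Fin m → ℝ))
    (hsymm : ∀ v w, B v w = B w v)
    (hprop : ∀ v, ∃ c : ℝ, B v v = c • v) :
    ∃ φ : (Fin m → ℝ) →ₗ[ℝ] ℝ, ∀ v w, B v w = φ v • w + φ w • v := by
  classical
  have hc' : ∀ v : Fin m → ℝ, ∃ c : ℝ, B v v = c • v ∧ (v = 0 → c = 0) := by
    intro v
    by_cases hv : v = 0
    · exact ⟨0, by simp [hv], fun _ => rfl⟩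
    · obtain ⟨c, hcv⟩ := hprop v
      exact ⟨c, hcv, fun h => absurd h hv⟩
  choose c hcB hc0 using hc'
  -- main pointwise formula
  have F : ∀ v w, B v w = (c v / 2) • w + (c w / 2) • v := by
    intro v w
    by_cases hv : v = 0
    · subst hv; simp [hc0 (0 : Fin m → ℝ) rfl]
    by_cases hw : w = 0
    · subst hw; simp [hc0 (0 : Fin m → ℝ) rfl]
    by_cases hdep : ∃ t : ℝ, w = t • v
    · obtain ⟨t, rfl⟩ := hdep
      have ht : t ≠ 0 := by rintro rfl; simp at hw
      have hct : c (t • v) = t * c v := by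
        have h1 : B (t • v) (t • v) = (t * (t * c v)) • v := by
          simp only [map_smul, LinearMap.smul_apply, hcB, smul_smul]
        have h2 : B (t • v) (t • v) = (c (t • v) * t) • v := by
          rw [hcB, smul_smul]
        have h3 : (t * (t * c v)) • v = (c (t • v) * t) • v := h1.symm.trans h2
        have h4 := smul_left_injective ℝ hv h3
        have h5 : (t * c v) * t = c (t • v) * t := by rw [mul_comm (t * c v) t]; exact h4
        exact (mul_right_cancel₀ ht h5).symm
      rw [map_smul, hcB, hct]
      module
    · have hind : ∀ a b : ℝ, a • v + b • w = 0 → a = 0 ∧ b = 0 := by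
        intro a b hab
        by_cases hb : b = 0
        · subst hb
          simp only [zero_smul, add_zero] at hab
          rcases smul_eq_zero.mp hab with h | h
          · exact ⟨h, rfl⟩
          · exact absurd h hv
        · exfalso
          apply hdep
          refine ⟨-a / b, ?_⟩
          have h5 : b • w = -(a • v) := by
            rw [eq_neg_iff_add_eq_zero, add_comm]; exact hab
          have := congrArg (fun z => b⁻¹ • z) h5
          simp only [smul_smul, inv_mul_cancel₀ hb, one_smul] at this
          rw [this]
          match_scalars
          field_simp
        -- done
      have e1 : c (v + w) • (v + w) + c (v - w) • (v - w)
          = (2 * c v) • v + (2 * c w) • w := by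
        have hexp : B (v + w) (v + w) + B (v - w) (v - w)
            = (2 : ℝ) • B v v + (2 : ℝ) • B w w := by
          simp only [map_add, map_sub, LinearMap.add_apply, LinearMap.sub_apply]
          module
        rw [hcB, hcB, hcB, hcB] at hexp
        rw [hexp]
        module
      have e2 : (c (v + w) + c (v - w) - 2 * c v) • v
            + (c (v + w) - c (v - w) - 2 * c w) • w
          = (c (v + w) • (v + w) + c (v - w) • (v - w))
            - ((2 * c v) • v + (2 * c w) • w) := by
        module
      rw [e1, sub_self] at e2
      obtain ⟨h1, h2⟩ := hind _ _ e2
      have hsum : c (v + w) = c v + c w := by linarith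
      have expand : (2 : ℝ) • B v w = B (v + w) (v + w) - B v v - B w w := by
        have hs := hsymm w v
        simp only [map_add, LinearMap.add_apply]
        rw [hs]
        module
      have h2B : (2 : ℝ) • B v w = c w • v + c v • w := by
        rw [expand, hcB, hcB, hcB, hsum]
        module
      have : B v w = (2 : ℝ)⁻¹ • ((2 : ℝ) • B v w) := by
        rw [smul_smul]; norm_num
      rw [this, h2B]
      module
  -- linearity via coordinates
  have i0 : Fin m := ⟨0, by omega⟩
  set e : Fin m → ℝ := Pi.single i0 1 with he
  have hei : e i0 = 1 := Pi.single_eq_same i0 1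
  have hform : ∀ v : Fin m → ℝ, c v / 2 = (B v e) i0 - (c e / 2) * v i0 := by
    intro v
    have := congrFun (F v e) i0
    simp only [Pi.add_apply, Pi.smul_apply, smul_eq_mul, hei, mul_one] at this
    linarith
  refine ⟨{ toFun := fun v => (B v e) i0 - (c e / 2) * v i0
            map_add' := ?_
            map_smul' := ?_ }, ?_⟩
  · intro v w
    simp only [map_add, LinearMap.add_apply, Pi.add_apply]
    ring
  · intro t v
    simp only [map_smul, LinearMap.smul_apply, Pi.smul_apply, smul_eq_mul,
      RingHom.id_apply]
    ring
  · intro v w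
    simp only [LinearMap.coe_mk, AddHom.coe_mk]
    rw [← hform v, ← hform w]
    exact F v w

/-- Let `D` be a symmetric (1,2)-tensor on a manifold of dimension `m ≥ 2` such that
`D(X,X)` is everywhere a scalar multiple of `X`.  Then there is a unique 1-form `φ` with
`D(X,Y) = φ(X) Y + φ(Y) X`. -/
theorem stmt_16 (m : ℕ) (hm : 2 ≤ m)
    (D : (Fin m → ℝ) → ((Fin m → ℝ) →ₗ[ℝ] (Fin m → ℝ) →ₗ[ℝ] (Fin m → ℝ)))
    (hsymm : ∀ x v w, D x v w = D x w v)
    (hprop : ∀ x v, ∃ c : ℝ, D x v v = c • v) :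
    ∃! φ : (Fin m → ℝ) → ((Fin m → ℝ) →ₗ[ℝ] ℝ),
      ∀ x v w, D x v w = φ x v • w + φ x w • v := by
  classical
  choose φ hφ using fun x => aux_bilin m hm (D x) (hsymm x) (hprop x)
  refine ⟨φ, fun x v w => hφ x v w, ?_⟩
  intro ψ hψ
  funext x
  refine LinearMap.ext fun v => ?_
  by_cases hv : v = 0
  · simp [hv]
  · have h1 : (2 * ψ x v) • v = (2 * φ x v) • v := by
      have a := hψ x v v
      have b := hφ x v v
      have ab := a.symm.trans b
      rw [two_mul, two_mul, add_smul, add_smul]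
      exact ab
    have h2 := smul_left_injective ℝ hv h1
    linarith [h2]
end

section
/- (Infinitesimal Pogorelov map, hyperbolic-Euclidean case) On the open unit ball B^n ⊂ ℝ^n, let ρ(x) = (1 − ⟨x,x⟩)^{−1/2} and let g be the Klein hyperbolic metric g_x(X,Y) = ρ(x)²⟨X,Y⟩ + ρ(x)⁴⟨x,X⟩⟨x,Y⟩. For a vector field K on B^n, define P(K)_x = K_x + ρ(x)²⟨x, K_x⟩ x. If K is a Killing field of g (i.e. g(∇^g_X K, X) = 0 for all X), then P(K) is a Killing field of the Euclidean metric, i.e. ⟨D_X P(K), X⟩ = 0 for all vector fields X, where D is the flat connection. -/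
open Matrix

set_option maxHeartbeats 2000000
/-- Standard Euclidean inner product on `ℝ^m`. -/
noncomputable def dotp {m : ℕ} (x y : Fin m → ℝ) : ℝ := ∑ i, x i * y i

/-- The Klein (projective model) hyperbolic metric on the unit ball of `ℝ^n`:
`g_x(X,Y) = ρ² ⟨X,Y⟩ + ρ⁴ ⟨x,X⟩⟨x,Y⟩` with `ρ(x)² = (1 - ⟨x,x⟩)⁻¹`. -/
noncomputable def kleinMetric (n : ℕ) (x : Fin n → ℝ) : Matrix (Fin n) (Fin n) ℝ :=
  Matrix.of fun i j =>
    (1 - dotp x x)⁻¹ * (if i = j then 1 else 0) + ((1 - dotp x x)⁻¹) ^ 2 * (x i * x j)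

/-- Covariant derivative `(∇^g_v K)(x)` of a vector field `K` in direction `v`
for the Levi-Civita connection of `g`. -/
noncomputable def covDeriv {m : ℕ} (g : (Fin m → ℝ) → Matrix (Fin m) (Fin m) ℝ)
    (K : (Fin m → ℝ) → (Fin m → ℝ)) (v : Fin m → ℝ) (x : Fin m → ℝ) : Fin m → ℝ :=
  fun k => fderiv ℝ (fun y => K y k) x v + ∑ i, ∑ j, christoffel g k i j x * v i * K x j

noncomputable def dl {n : ℕ} (w : Fin n → ℝ) : (Fin n → ℝ) →L[ℝ] ℝ :=
  ∑ i, w i • ContinuousLinearMap.proj i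
@[simp] lemma dl_apply {n : ℕ} (w v : Fin n → ℝ) : dl w v = dotp w v := by simp [dl, dotp]
lemma dotp_single {m : ℕ} (w : Fin m → ℝ) (i : Fin m) : dotp w (Pi.single i 1) = w i := by
  simp [dotp, Pi.single_apply, mul_ite]

lemma hq_deriv {n : ℕ} (x : Fin n → ℝ) :
    HasFDerivAt (fun y : Fin n → ℝ => dotp y y) (dl (fun i => 2 * x i)) x := by
  have h : HasFDerivAt (fun y : Fin n → ℝ => ∑ i, y i * y i)
      (∑ i : Fin n, (x i • ContinuousLinearMap.proj i
        + x i • ContinuousLinearMap.proj (R := ℝ) (φ := fun _ : Fin n => ℝ) i)) x :=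
    HasFDerivAt.fun_sum (fun i _ => (hasFDerivAt_apply i x).mul (hasFDerivAt_apply i x))
  unfold dotp
  refine h.congr_fderiv ?_
  ext v
  simp [dl, dotp, Finset.mul_sum]
  exact Finset.sum_congr rfl fun i _ => by ring

lemma hr_deriv {n : ℕ} (x : Fin n → ℝ) (hs : (1 : ℝ) - dotp x x ≠ 0) :
    HasFDerivAt (fun y : Fin n → ℝ => (1 - dotp y y)⁻¹)
      (dl (fun i => 2 * ((1 - dotp x x)⁻¹)^2 * x i)) x := by
  have h := (hasFDerivAt_inv' (𝕜 := ℝ) hs).comp x ((hasFDerivAt_const (1:ℝ) x).sub (hq_deriv x))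
  refine h.congr_fderiv ?_
  ext v
  simp [dl, dotp, Finset.mul_sum, ContinuousLinearMap.mulLeftRight_apply]
  exact Finset.sum_congr rfl fun k _ => by rw [← inv_pow]; ring

lemma hm_deriv {n : ℕ} (x : Fin n → ℝ) (hs : (1 : ℝ) - dotp x x ≠ 0) (j l : Fin n) :
    HasFDerivAt (fun y : Fin n → ℝ => kleinMetric n y j l)
      (dl (fun i =>
        2 * ((1 - dotp x x)⁻¹)^2 * x i * (if j = l then 1 else 0)
        + 4 * ((1 - dotp x x)⁻¹)^3 * (x i * x j * x l)
        + ((1 - dotp x x)⁻¹)^2 * ((if i = j then (1:ℝ) else 0) * x l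
            + (if i = l then (1:ℝ) else 0) * x j))) x := by
  have funeq : (fun y : Fin n → ℝ => kleinMetric n y j l)
      = (fun y : Fin n → ℝ => (1 - dotp y y)⁻¹ * (if j = l then (1:ℝ) else 0)
          + ((1 - dotp y y)⁻¹ * (1 - dotp y y)⁻¹) * (y j * y l)) := by
    funext y; simp only [kleinMetric, Matrix.of_apply, pow_two]
  rw [funeq]
  have h := ((hr_deriv x hs).mul (hasFDerivAt_const (if j = l then (1:ℝ) else 0) x)).add
    (((hr_deriv x hs).mul (hr_deriv x hs)).mul ((hasFDerivAt_apply j x).mul (hasFDerivAt_apply l x)))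
  refine h.congr_fderiv (Eq.symm ?_)
  ext v
  simp only [dl_apply, ContinuousLinearMap.add_apply, ContinuousLinearMap.smul_apply,
    ContinuousLinearMap.zero_apply, ContinuousLinearMap.proj_apply, smul_eq_mul, Pi.mul_apply]
  have split : ∀ i, (2 * ((1 - dotp x x)⁻¹)^2 * x i * (if j = l then 1 else 0)
        + 4 * ((1 - dotp x x)⁻¹)^3 * (x i * x j * x l)
        + ((1 - dotp x x)⁻¹)^2 * ((if i = j then (1:ℝ) else 0) * x l
            + (if i = l then (1:ℝ) else 0) * x j)) * v i
      = (if j = l then (1:ℝ) else 0) * (2 * ((1 - dotp x x)⁻¹)^2 * (x i * v i))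
        + 4 * ((1 - dotp x x)⁻¹)^3 * (x j * x l) * (x i * v i)
        + ((1 - dotp x x)⁻¹)^2 * x l * ((if i = j then (1:ℝ) else 0) * v i)
        + ((1 - dotp x x)⁻¹)^2 * x j * ((if i = l then (1:ℝ) else 0) * v i) := fun i => by ring
  show (∑ i, _ * v i) = _
  rw [show (∑ i, (2 * ((1 - dotp x x)⁻¹)^2 * x i * (if j = l then 1 else 0)
        + 4 * ((1 - dotp x x)⁻¹)^3 * (x i * x j * x l)
        + ((1 - dotp x x)⁻¹)^2 * ((if i = j then (1:ℝ) else 0) * x l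
            + (if i = l then (1:ℝ) else 0) * x j)) * v i) = _ from Finset.sum_congr rfl (fun i _ => split i)]
  simp only [Finset.sum_add_distrib, ← Finset.mul_sum, ite_mul, one_mul, zero_mul,
    Finset.sum_ite_eq, Finset.sum_ite_eq', Finset.mem_univ, if_true]
  simp only [dotp]
  have e1 : ∀ c : ℝ, (∑ k : Fin n, c * (x k * v k)) = c * ∑ k : Fin n, x k * v k :=
    fun c => by rw [Finset.mul_sum]
  have e2 : ∀ c : ℝ, (∑ k : Fin n, c * x k * v k) = c * ∑ k : Fin n, x k * v k :=
    fun c => by rw [Finset.mul_sum]; exact Finset.sum_congr rfl fun k _ => by ring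
  by_cases hjl : j = l <;>
    simp only [hjl, if_true, if_false, Finset.sum_ite_eq', e1, e2, Finset.sum_const_zero] <;>
    ring

lemma pd_klein {n : ℕ} (x : Fin n → ℝ) (hs : (1 : ℝ) - dotp x x ≠ 0) (i j l : Fin n) :
    pd i (fun y => kleinMetric n y j l) x =
      2 * ((1 - dotp x x)⁻¹)^2 * x i * (if j = l then 1 else 0)
      + 4 * ((1 - dotp x x)⁻¹)^3 * (x i * x j * x l)
      + ((1 - dotp x x)⁻¹)^2 * ((if i = j then (1:ℝ) else 0) * x l
          + (if i = l then (1:ℝ) else 0) * x j) := by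
  rw [pd, (hm_deriv x hs j l).fderiv, dl_apply, dotp_single]

lemma klein_inv {n : ℕ} (x : Fin n → ℝ) (hs : (1 : ℝ) - dotp x x ≠ 0) :
    (kleinMetric n x)⁻¹ = Matrix.of (fun k l =>
      (1 - dotp x x) * ((if k = l then (1:ℝ) else 0) - x k * x l)) := by
  apply Matrix.inv_eq_right_inv
  ext i j
  simp only [Matrix.mul_apply, kleinMetric, Matrix.of_apply, Matrix.one_apply]
  have split : ∀ l, ((1 - dotp x x)⁻¹ * (if i = l then 1 else 0)
        + ((1 - dotp x x)⁻¹) ^ 2 * (x i * x l))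
        * ((1 - dotp x x) * ((if l = j then (1:ℝ) else 0) - x l * x j))
      = ((1 - dotp x x)⁻¹ * (1 - dotp x x)) * ((if i = l then (1:ℝ) else 0) * (if l = j then (1:ℝ) else 0))
        - ((1 - dotp x x)⁻¹ * (1 - dotp x x) * x j) * ((if i = l then (1:ℝ) else 0) * x l)
        + (((1 - dotp x x)⁻¹)^2 * (1 - dotp x x) * x i) * (x l * (if l = j then (1:ℝ) else 0))
        - (((1 - dotp x x)⁻¹)^2 * (1 - dotp x x) * x i * x j) * (x l * x l) := fun l => by ring
  rw [Finset.sum_congr rfl (fun l _ => split l)]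
  simp only [Finset.sum_add_distrib, Finset.sum_sub_distrib, ← Finset.mul_sum,
    ite_mul, mul_ite, one_mul, mul_one, zero_mul, mul_zero,
    Finset.sum_ite_eq, Finset.sum_ite_eq', Finset.mem_univ, if_true]
  have hd : (∑ l, x l * x l) = dotp x x := rfl
  rw [hd]
  by_cases hij : i = j <;> simp only [hij, if_true, if_false] <;> field_simp <;> ring

lemma christ {n : ℕ} (x : Fin n → ℝ) (hs : (1 : ℝ) - dotp x x ≠ 0) (k i j : Fin n) :
    christoffel (kleinMetric n) k i j x =
      (1 - dotp x x)⁻¹ * (x i * (if j = k then (1:ℝ) else 0)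
        + x j * (if i = k then (1:ℝ) else 0)) := by
  unfold christoffel
  rw [klein_inv x hs]
  simp only [Matrix.of_apply, pd_klein x hs]
  set r := (1 - dotp x x)⁻¹ with hr
  set s := 1 - dotp x x with hsdef
  -- abbreviation for the big bracket
  have split : ∀ l : Fin n,
      (s * ((if k = l then (1:ℝ) else 0) - x k * x l)) *
      ((2 * r^2 * x i * (if j = l then 1 else 0)
          + 4 * r^3 * (x i * x j * x l)
          + r^2 * ((if i = j then (1:ℝ) else 0) * x l + (if i = l then (1:ℝ) else 0) * x j))
        + (2 * r^2 * x j * (if i = l then 1 else 0)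
          + 4 * r^3 * (x j * x i * x l)
          + r^2 * ((if j = i then (1:ℝ) else 0) * x l + (if j = l then (1:ℝ) else 0) * x i))
        - (2 * r^2 * x l * (if i = j then 1 else 0)
          + 4 * r^3 * (x l * x i * x j)
          + r^2 * ((if l = i then (1:ℝ) else 0) * x j + (if l = j then (1:ℝ) else 0) * x i)))
      = s * ((if k = l then (1:ℝ) else 0) *
          ((2 * r^2 * x i * (if j = l then 1 else 0)
          + 4 * r^3 * (x i * x j * x l)
          + r^2 * ((if i = j then (1:ℝ) else 0) * x l + (if i = l then (1:ℝ) else 0) * x j))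
        + (2 * r^2 * x j * (if i = l then 1 else 0)
          + 4 * r^3 * (x j * x i * x l)
          + r^2 * ((if j = i then (1:ℝ) else 0) * x l + (if j = l then (1:ℝ) else 0) * x i))
        - (2 * r^2 * x l * (if i = j then 1 else 0)
          + 4 * r^3 * (x l * x i * x j)
          + r^2 * ((if l = i then (1:ℝ) else 0) * x j + (if l = j then (1:ℝ) else 0) * x i))))
        - (s * x k) * (
          (2 * r^2 * x i) * ((if j = l then (1:ℝ) else 0) * x l)
          + 4 * r^3 * (x i * x j) * (x l * x l)
          + (r^2 * (if i = j then (1:ℝ) else 0)) * (x l * x l)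
          + (r^2 * x j) * ((if i = l then (1:ℝ) else 0) * x l)
          + (2 * r^2 * x j) * ((if i = l then (1:ℝ) else 0) * x l)
          + 4 * r^3 * (x j * x i) * (x l * x l)
          + (r^2 * (if j = i then (1:ℝ) else 0)) * (x l * x l)
          + (r^2 * x i) * ((if j = l then (1:ℝ) else 0) * x l)
          - (2 * r^2 * (if i = j then (1:ℝ) else 0)) * (x l * x l)
          - 4 * r^3 * (x i * x j) * (x l * x l)
          - (r^2 * x j) * ((if l = i then (1:ℝ) else 0) * x l)
          - (r^2 * x i) * ((if l = j then (1:ℝ) else 0) * x l)) := fun l => by ring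
  rw [Finset.sum_congr rfl (fun l _ => split l)]
  clear split
  have hd : (∑ l, x l * x l) = dotp x x := rfl
  by_cases hij : i = j
  · subst hij
    by_cases hik : i = k
    · subst hik
      simp [mul_ite, ite_mul, Finset.sum_add_distrib, Finset.sum_sub_distrib,
        ← Finset.mul_sum, Finset.sum_ite_eq, Finset.sum_ite_eq', hd]
      rw [hr, hsdef] at *
      field_simp [show (1:ℝ) - dotp x x ≠ 0 from hs]
      ring
    · simp [mul_ite, ite_mul, Finset.sum_add_distrib, Finset.sum_sub_distrib,
        ← Finset.mul_sum, Finset.sum_ite_eq, Finset.sum_ite_eq', hd, hik, Ne.symm hik]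
      rw [hr, hsdef] at *
      field_simp
      ring
  · by_cases hjk : j = k
    · subst hjk
      simp [mul_ite, ite_mul, Finset.sum_add_distrib, Finset.sum_sub_distrib,
        ← Finset.mul_sum, Finset.sum_ite_eq, Finset.sum_ite_eq', hd, hij, Ne.symm hij]
      rw [hr, hsdef] at *
      field_simp [show (1:ℝ) - dotp x x ≠ 0 from hs]
      ring
    · by_cases hik : i = k
      · subst hik
        simp [mul_ite, ite_mul, Finset.sum_add_distrib, Finset.sum_sub_distrib,
          ← Finset.mul_sum, Finset.sum_ite_eq, Finset.sum_ite_eq', hd, hij, Ne.symm hij,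
          hjk, Ne.symm hjk]
        rw [hr, hsdef] at *
        field_simp [show (1:ℝ) - dotp x x ≠ 0 from hs]
        ring
      · simp [mul_ite, ite_mul, Finset.sum_add_distrib, Finset.sum_sub_distrib,
          ← Finset.mul_sum, Finset.sum_ite_eq, Finset.sum_ite_eq', hd, hij, Ne.symm hij,
          hjk, Ne.symm hjk, hik, Ne.symm hik]
        rw [hr, hsdef] at *
        field_simp
        ring

lemma covD {n : ℕ} (x : Fin n → ℝ) (hs : (1 : ℝ) - dotp x x ≠ 0)
    (K : (Fin n → ℝ) → (Fin n → ℝ)) (v : Fin n → ℝ) (k : Fin n) :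
    covDeriv (kleinMetric n) K v x k = fderiv ℝ (fun y => K y k) x v
      + (1 - dotp x x)⁻¹ * (dotp x v * K x k + dotp x (K x) * v k) := by
  unfold covDeriv
  congr 1
  simp only [christ x hs]
  have inner : ∀ i : Fin n, (∑ j, (1 - dotp x x)⁻¹ * (x i * (if j = k then (1:ℝ) else 0)
        + x j * (if i = k then (1:ℝ) else 0)) * v i * K x j)
      = ((1 - dotp x x)⁻¹ * K x k) * (x i * v i)
        + ((1 - dotp x x)⁻¹ * dotp x (K x)) * ((if i = k then (1:ℝ) else 0) * v i) := by
    intro i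
    have sp : ∀ j : Fin n, (1 - dotp x x)⁻¹ * (x i * (if j = k then (1:ℝ) else 0)
          + x j * (if i = k then (1:ℝ) else 0)) * v i * K x j
        = ((1 - dotp x x)⁻¹ * x i * v i) * ((if j = k then (1:ℝ) else 0) * K x j)
          + ((1 - dotp x x)⁻¹ * v i * (if i = k then (1:ℝ) else 0)) * (x j * K x j) :=
      fun j => by ring
    rw [Finset.sum_congr rfl (fun j _ => sp j)]
    have hb : (∑ j, x j * K x j) = dotp x (K x) := rfl
    simp only [Finset.sum_add_distrib, ← Finset.mul_sum, ite_mul, one_mul, zero_mul,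
      Finset.sum_ite_eq', Finset.mem_univ, if_true, hb]
    by_cases h : i = k <;> simp [h] <;> ring
  rw [Finset.sum_congr rfl (fun i _ => inner i)]
  have ha : (∑ i, x i * v i) = dotp x v := rfl
  simp only [Finset.sum_add_distrib, ← Finset.mul_sum, ite_mul, one_mul, zero_mul,
    Finset.sum_ite_eq', Finset.mem_univ, if_true, ha]
  ring

lemma killred {n : ℕ} (x v u Kx : Fin n → ℝ) (r : ℝ) :
    (∑ i, ∑ j, ((r * (if i = j then (1:ℝ) else 0) + r^2 * (x i * x j))
        * (u i + r * (dotp x v * Kx i + dotp x Kx * v i)) * v j))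
    = r * (dotp u v + r * (dotp x v * dotp Kx v + dotp x Kx * dotp v v))
      + r^2 * ((dotp x u + r * (dotp x v * dotp x Kx + dotp x Kx * dotp x v)) * dotp x v) := by
  have inner : ∀ i : Fin n, (∑ j, ((r * (if i = j then (1:ℝ) else 0) + r^2 * (x i * x j))
        * (u i + r * (dotp x v * Kx i + dotp x Kx * v i)) * v j))
      = (r * (u i + r * (dotp x v * Kx i + dotp x Kx * v i))) * v i
        + (r^2 * x i * (u i + r * (dotp x v * Kx i + dotp x Kx * v i))) * dotp x v := by
    intro i
    have sp : ∀ j : Fin n, ((r * (if i = j then (1:ℝ) else 0) + r^2 * (x i * x j))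
          * (u i + r * (dotp x v * Kx i + dotp x Kx * v i)) * v j)
        = (r * (u i + r * (dotp x v * Kx i + dotp x Kx * v i)))
            * ((if i = j then (1:ℝ) else 0) * v j)
          + (r^2 * x i * (u i + r * (dotp x v * Kx i + dotp x Kx * v i))) * (x j * v j) :=
      fun j => by ring
    rw [Finset.sum_congr rfl (fun j _ => sp j)]
    have ha : (∑ j, x j * v j) = dotp x v := rfl
    simp only [Finset.sum_add_distrib, ← Finset.mul_sum, ite_mul, one_mul, zero_mul,
      Finset.sum_ite_eq, Finset.mem_univ, if_true, ha]
  rw [Finset.sum_congr rfl (fun i _ => inner i)]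
  have sp2 : ∀ i : Fin n, (r * (u i + r * (dotp x v * Kx i + dotp x Kx * v i))) * v i
        + (r^2 * x i * (u i + r * (dotp x v * Kx i + dotp x Kx * v i))) * dotp x v
      = r * (u i * v i) + (r * r * dotp x v) * (Kx i * v i) + (r * r * dotp x Kx) * (v i * v i)
        + (r^2 * dotp x v) * (x i * u i) + (r^2 * r * dotp x v * dotp x v) * (x i * Kx i)
        + (r^2 * r * dotp x Kx * dotp x v) * (x i * v i) := fun i => by ring
  rw [Finset.sum_congr rfl (fun i _ => sp2 i)]
  simp only [Finset.sum_add_distrib, ← Finset.mul_sum]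
  have h1 : (∑ i, u i * v i) = dotp u v := rfl
  have h2 : (∑ i, Kx i * v i) = dotp Kx v := rfl
  have h3 : (∑ i, v i * v i) = dotp v v := rfl
  have h4 : (∑ i, x i * u i) = dotp x u := rfl
  have h5 : (∑ i, x i * Kx i) = dotp x Kx := rfl
  have h6 : (∑ i, x i * v i) = dotp x v := rfl
  rw [h1, h2, h3, h4, h5, h6]
  ring

/-- (Infinitesimal Pogorelov map, hyperbolic–Euclidean case.)  If `K` is a Killing field of
the Klein hyperbolic metric `g` on the open unit ball `B^n` (i.e. `g(∇^g_X K, X) = 0`),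
then `P(K)_x = K_x + ρ(x)² ⟨x, K_x⟩ x` is a Killing field of the Euclidean metric:
`⟨D_X P(K), X⟩ = 0` for the flat connection `D`. -/
theorem stmt_17 (n : ℕ) (K : (Fin n → ℝ) → (Fin n → ℝ))
    (hK : ContDiffOn ℝ (⊤ : ℕ∞) K {x : Fin n → ℝ | dotp x x < 1})
    (hkill : ∀ x, dotp x x < 1 → ∀ v : Fin n → ℝ,
      ∑ i, ∑ j, kleinMetric n x i j * covDeriv (kleinMetric n) K v x i * v j = 0) :
    ∀ x, dotp x x < 1 → ∀ v : Fin n → ℝ,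
      dotp (fderiv ℝ (fun y => K y + ((1 - dotp y y)⁻¹ * dotp y (K y)) • y) x v) v = 0 := by
  intro x hx v
  have hs : (1:ℝ) - dotp x x ≠ 0 := ne_of_gt (by linarith)
  have hopen : IsOpen {y : Fin n → ℝ | dotp y y < 1} := by
    have hc : Continuous (fun y : Fin n → ℝ => dotp y y) := by
      unfold dotp
      exact continuous_finset_sum _ (fun i _ => (continuous_apply i).mul (continuous_apply i))
    exact isOpen_lt hc continuous_const
  have hKd : DifferentiableAt ℝ K x :=
    (hK.contDiffAt (hopen.mem_nhds hx)).differentiableAt (by simp)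
  set K' := fderiv ℝ K x with hK'def
  have hK' : HasFDerivAt K K' x := hKd.hasFDerivAt
  have hDK : ∀ k, fderiv ℝ (fun y => K y k) x v = K' v k := by
    intro k
    rw [(hasFDerivAt_pi'.1 hK' k).fderiv]
    simp
  have hb : HasFDerivAt (fun y : Fin n → ℝ => dotp y (K y)) (dl (K x) + (dl x).comp K') x := by
    have h : HasFDerivAt (fun y : Fin n → ℝ => ∑ i, y i * K y i)
        (∑ i : Fin n, (x i • ((ContinuousLinearMap.proj i).comp K')
          + K x i • ContinuousLinearMap.proj (R := ℝ) (φ := fun _ : Fin n => ℝ) i)) x :=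
      HasFDerivAt.fun_sum (fun i _ =>
        (hasFDerivAt_apply i x).mul ((hasFDerivAt_apply i (K x)).comp (g := fun f : Fin n → ℝ => f i) x hK'))
    unfold dotp
    refine h.congr_fderiv ?_
    ext w
    simp [dl, dotp, Finset.sum_add_distrib]
    ring_nf
  have hrx := hr_deriv x hs
  have hP := hK'.add ((hrx.mul hb).smul (hasFDerivAt_id x))
  have hfd := HasFDerivAt.fderiv
    (f := fun y : Fin n → ℝ => K y + ((1 - dotp y y)⁻¹ * dotp y (K y)) • y) hP
  rw [hfd]
  simp only [ContinuousLinearMap.add_apply, ContinuousLinearMap.smul_apply,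
    ContinuousLinearMap.smulRight_apply, ContinuousLinearMap.id_apply,
    ContinuousLinearMap.comp_apply, dl_apply, smul_eq_mul, Pi.mul_apply, id_eq]
  have dadd : ∀ u1 u2 : Fin n → ℝ, dotp (u1 + u2) v = dotp u1 v + dotp u2 v := by
    intro u1 u2; simp [dotp, Finset.sum_add_distrib, add_mul]
  have dsmul : ∀ (c : ℝ) (u : Fin n → ℝ), dotp (c • u) v = c * dotp u v := by
    intro c u; simp [dotp, Finset.mul_sum, mul_assoc]
  have dscale : dotp (fun i => 2 * (1 - dotp x x)⁻¹ ^ 2 * x i) v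
      = 2 * (1 - dotp x x)⁻¹ ^ 2 * dotp x v := by
    unfold dotp; rw [Finset.mul_sum]; exact Finset.sum_congr rfl fun i _ => by ring
  rw [dadd, dadd, dsmul, dsmul, dscale]
  have hcov : ∀ k, covDeriv (kleinMetric n) K v x k
      = K' v k + (1 - dotp x x)⁻¹ * (dotp x v * K x k + dotp x (K x) * v k) :=
    fun k => by rw [covD x hs K v k, hDK k]
  have hk := hkill x hx v
  simp only [hcov, kleinMetric, Matrix.of_apply] at hk
  rw [killred x v (K' v) (K x) ((1 - dotp x x)⁻¹)] at hk
  field_simp at hk ⊢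
  linear_combination hk
end
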